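/- Let D = diag(σ₁, σ₂, σ₃) with σ₁ + σ₂ ≥ 2, c = 2/(σ₁+σ₂), s = √(1 − c²), and R̂ the z-axis rotation with rows (c, −s, 0), (s, c, 0), (0, 0, 1). Then ‖skew(R̂D − 1)‖² = ((σ₁+σ₂)²/2)·(1 − c²) = (σ₁+σ₂)²/2 − 2. -/

import Mathlib

open Matrix

noncomputable section

/-- Squared Frobenius norm. -/
def fnormSq (X : Matrix (Fin 3) (Fin 3) ℝ) : ℝ := ∑ i, ∑ j, (X i j)^2

/-- Skew-symmetric part. -/
def skewPart (X : Matrix (Fin 3) (Fin 3) ℝ) : Matrix (Fin 3) (Fin 3) ℝ :=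
  (1/2 : ℝ) • (X - Xᵀ)

/-- With `D = diag(σ₁,σ₂,σ₃)`, `σ₁+σ₂ ≥ 2`, `c = 2/(σ₁+σ₂)`, `s = √(1−c²)`, and
`R̂` the z-axis rotation with rows `(c,−s,0),(s,c,0),(0,0,1)`, one has
`‖skew(R̂D − 1)‖² = ((σ₁+σ₂)²/2)(1−c²) = (σ₁+σ₂)²/2 − 2`. -/
theorem skew_energy_of_optimal_relative_rotation
    (σ₁ σ₂ σ₃ : ℝ) (h₁ : 0 < σ₁) (h₂ : 0 < σ₂) (h₃ : 0 < σ₃)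
    (hs : 2 ≤ σ₁ + σ₂)
    (c s : ℝ) (hc : c = 2 / (σ₁ + σ₂)) (hss : s = Real.sqrt (1 - c^2))
    (R D : Matrix (Fin 3) (Fin 3) ℝ)
    (hR : R = !![c, -s, 0; s, c, 0; 0, 0, 1])
    (hD : D = !![σ₁, 0, 0; 0, σ₂, 0; 0, 0, σ₃]) :
    fnormSq (skewPart (R * D - 1)) = ((σ₁ + σ₂)^2 / 2) * (1 - c^2) ∧
    fnormSq (skewPart (R * D - 1)) = (σ₁ + σ₂)^2 / 2 - 2 := by
  have hpos : (0:ℝ) < σ₁ + σ₂ := by linarith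
  have hc1 : c ≤ 1 := by
    rw [hc]; rw [div_le_one hpos]; linarith
  have hc0 : 0 ≤ c := by rw [hc]; positivity
  have hs2 : s^2 = 1 - c^2 := by
    rw [hss, Real.sq_sqrt]; nlinarith
  have hkey : fnormSq (skewPart (R * D - 1)) = s^2 * (σ₁ + σ₂)^2 / 2 := by
    subst hR hD
    simp only [fnormSq, skewPart, Fin.sum_univ_three]
    norm_num [Matrix.mul_apply, Fin.sum_univ_three, Matrix.one_apply,
      Matrix.sub_apply, Matrix.smul_apply, Matrix.transpose_apply,
      Matrix.vecHead, Matrix.vecTail, Function.comp]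
    simp only [Matrix.cons_val_two, Matrix.cons_val_one, Matrix.cons_val_zero, Matrix.tail_cons,
      Matrix.head_cons, Matrix.cons_val_succ, Matrix.vecHead]
    ring
  have h4 : c^2 * (σ₁ + σ₂)^2 = 4 := by rw [hc]; field_simp; norm_num
  constructor
  · rw [hkey, hs2]; ring
  · rw [hkey, hs2]; linear_combination (-(1:ℝ)/2) * h4
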